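/- Let A_I be the 6×6 lower triangular real matrix with rows: row 1: (3/4, 0, 0, 0, 0, 0); row 2: (−1/2, 3/2, 0, 0, 0, 0); row 3: (−169/800, 129/800, 1/2, 0, 0, 0); row 4: (−11099846794473413537/13545655559296875000, 5938991227245191/56762747105625000, 4021588899578801/4257206032921875, 144648284471/278085937500, 0, 0); row 5: (−15012700453574148059759/355573458431542968750000, 37751222339857820917/135456555592968750000, 2547104330002710487/10159241669472656250, −3921377950657453/7299755859375000, 4/5, 0); row 6: (94181/262500, −53/100, 3/5, −125681/262500, 4/5, 1/4). Let E₆ be the 6×6 lower triangular matrix all of whose entries on and below the diagonal equal 1. Then the symmetric part (M + Mᵀ)/2 of M := E₆⁻¹A_I is positive definite. -/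

import Mathlib

/-!
`E₆⁻¹` is the backward difference matrix, and the quadratic form of the symmetric part of
`M = E₆⁻¹ A_I` is that of `M` itself. An exact rational `LDLᵀ` factorisation writes this form
as `∑ dᵢ (U x)ᵢ²` with every `dᵢ > 0` and `U` unit upper triangular, hence invertible, so the
form is positive off `x = 0`.
-/

open Matrix

section
variable {n R : Type*} [Fintype n]

lemma dotProduct_half_smul_add_transpose_mulVec [Field R] [CharZero R]
    (M : Matrix n n R) (x : n → R) :
    x ⬝ᵥ ((1 / 2 : R) • (M + Mᵀ)) *ᵥ x = x ⬝ᵥ M *ᵥ x := by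
  rw [smul_mulVec, dotProduct_smul, add_mulVec, dotProduct_add, mulVec_transpose,
    dotProduct_comm x (x ᵥ* M), ← dotProduct_mulVec, smul_eq_mul]
  ring

variable [DecidableEq n]

lemma isUnit_of_isUpperTriangular_of_diag_eq_one [LinearOrder n] [CommRing R] {U : Matrix n n R}
    (hU : U.IsUpperTriangular) (hdiag : ∀ i, U i i = 1) : IsUnit U := by
  rw [isUnit_iff_isUnit_det, det_of_isUpperTriangular hU]
  simp [hdiag]

lemma sum_mul_sq_mulVec_pos [Field R] [LinearOrder R] [IsStrictOrderedRing R]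
    {d : n → R} (hd : ∀ i, 0 < d i) {U : Matrix n n R} (hU : IsUnit U) {x : n → R}
    (hx : x ≠ 0) : 0 < ∑ i, d i * (U *ᵥ x) i ^ 2 := by
  have hUx : U *ᵥ x ≠ 0 := fun h ↦ hx (mulVec_injective_of_isUnit hU (by rw [h, mulVec_zero]))
  obtain ⟨i, hi⟩ := Function.ne_iff.mp hUx
  exact Finset.sum_pos' (fun j _ ↦ mul_nonneg (hd j).le (sq_nonneg _))
    ⟨i, Finset.mem_univ i, mul_pos (hd i) (sq_pos_of_ne_zero hi)⟩

end

def lowerOnes (n : ℕ) (R : Type*) [Zero R] [One R] : Matrix (Fin n) (Fin n) R :=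
  fun i j ↦ if j ≤ i then 1 else 0

def backwardDiff (n : ℕ) (R : Type*) [Zero R] [One R] [Neg R] : Matrix (Fin n) (Fin n) R :=
  fun i j ↦ if i = j then 1 else if (j : ℕ) + 1 = i then -1 else 0

lemma backwardDiff_mul_lowerOnes {n : ℕ} {R : Type*} [Ring R] :
    backwardDiff n R * lowerOnes n R = 1 := by
  ext ⟨i, hi⟩ ⟨j, hj⟩
  rw [mul_apply, one_apply]
  rcases i with _ | m
  · refine (Fintype.sum_eq_single ⟨0, hi⟩ fun ⟨k, hk⟩ hk0 ↦ ?_).trans ?_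
    all_goals
      simp only [backwardDiff, lowerOnes, ne_eq, Fin.mk.injEq, Fin.mk_le_mk] at *
      split_ifs <;> first | omega | simp_all
  · refine (Fintype.sum_eq_add ⟨m + 1, hi⟩ ⟨m, by omega⟩ (by simp [Fin.ext_iff])
      fun ⟨k, hk⟩ hk0 ↦ ?_).trans ?_
    all_goals
      simp only [backwardDiff, lowerOnes, ne_eq, Fin.mk.injEq, Fin.mk_le_mk] at *
      split_ifs <;> first | omega | simp_all

lemma inv_lowerOnes {n : ℕ} {R : Type*} [CommRing R] :
    (lowerOnes n R)⁻¹ = backwardDiff n R :=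
  inv_eq_left_inv backwardDiff_mul_lowerOnes

noncomputable def ierk47Implicit : Matrix (Fin 6) (Fin 6) ℝ :=
  !![3 / 4, 0, 0, 0, 0, 0;
     -1 / 2, 3 / 2, 0, 0, 0, 0;
     -169 / 800, 129 / 800, 1 / 2, 0, 0, 0;
     -11099846794473413537 / 13545655559296875000, 5938991227245191 / 56762747105625000,
       4021588899578801 / 4257206032921875, 144648284471 / 278085937500, 0, 0;
     -15012700453574148059759 / 355573458431542968750000,
       37751222339857820917 / 135456555592968750000,
       2547104330002710487 / 10159241669472656250,
       -3921377950657453 / 7299755859375000, 4 / 5, 0;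
     94181 / 262500, -53 / 100, 3 / 5, -125681 / 262500, 4 / 5, 1 / 4]

/- The symmetric part of `backwardDiff 6 ℝ * ierk47Implicit` equals `Uᵀ * diagonal d * U` for
`U = ierk47LDLUpper` and `d = ierk47LDLDiag`: its exact rational `LDLᵀ` factorisation. -/
noncomputable def ierk47LDLUpper : Matrix (Fin 6) (Fin 6) ℝ :=
  !![1, -5 / 6, 77 / 400, -32953308230287794773 / 81273933355781250000,
       276358277901352957286491 / 533360187647314453125000,
       142587039076588046497259 / 533360187647314453125000;
     0, 1, -5271 / 9400, -402982812501729929653 / 1400620784831296875000,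
       3856940573888119294112951 / 9191573900455385742187500,
       -202474030856425417516291 / 835597627314125976562500;
     0, 0, 1, 24589045391768268947471 / 32879360063613048046875,
       -1005188459670823344479630203 / 863083201669842511230468750,
       1432753802648276924992973 / 78462109242712955566406250;
     0, 0, 0, 1,
       -9881520249602553623602143012328222924961076471889 /
         20155439587195093236430263177452923827620109322500,
       3600070505319027261417522357896013532340451524389 /
         20155439587195093236430263177452923827620109322500;
     0, 0, 0, 0, 1,
       79449672566764987044437611300559867951977214352030373 /
         632897134004253518646866404575855925218155877850161127;
     0, 0, 0, 0, 0, 1]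

noncomputable def ierk47LDLDiag : Fin 6 → ℝ :=
  ![3 / 4, 47 / 48, 308929 / 1880000,
    383913134994192252122481203380055691954668749 /
      1714684072762444390991890505873107910156250000,
    632897134004253518646866404575855925218155877850161127 /
      4232642313310969579650355267265114003800222957725000000,
    73680275778518874694118417294020234751408613175718507411 /
      569607420603828166782179764118270332696340290065145014300]

lemma ierk47LDLUpper_isUpperTriangular : ierk47LDLUpper.IsUpperTriangular := by
  intro i j h
  fin_cases i <;> fin_cases j <;> first | rfl | (exfalso; revert h; decide)

lemma ierk47LDLUpper_diag (i : Fin 6) : ierk47LDLUpper i i = 1 := by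
  fin_cases i <;> rfl

lemma ierk47LDLDiag_pos (i : Fin 6) : 0 < ierk47LDLDiag i := by
  fin_cases i <;> norm_num [ierk47LDLDiag]

lemma ierk47_quadForm_eq_sum_sq (x : Fin 6 → ℝ) :
    x ⬝ᵥ (backwardDiff 6 ℝ * ierk47Implicit) *ᵥ x =
      ∑ i, ierk47LDLDiag i * (ierk47LDLUpper *ᵥ x) i ^ 2 := by
  simp only [dotProduct, mulVec, mul_apply, Fin.sum_univ_six, backwardDiff, ierk47Implicit,
    ierk47LDLUpper, ierk47LDLDiag, of_apply, cons_val', cons_val_fin_one, cons_val, Fin.reduceEq,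
    Fin.isValue, Fin.coe_ofNat_eq_mod, Nat.reduceMod, Nat.reduceAdd, Nat.reduceEqDiff, ↓reduceIte]
  ring

/-- The symmetric part of the difference coefficient matrix `E₆⁻¹ A_I` of the
fourth-order IERK(4,7;â₄₃) method is positive definite. -/
theorem IERK47_symmetric_part_posDef :
    let AI : Matrix (Fin 6) (Fin 6) ℝ :=
      !![3 / 4, 0, 0, 0, 0, 0;
         -1 / 2, 3 / 2, 0, 0, 0, 0;
         -169 / 800, 129 / 800, 1 / 2, 0, 0, 0;
         -11099846794473413537 / 13545655559296875000, 5938991227245191 / 56762747105625000,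
           4021588899578801 / 4257206032921875, 144648284471 / 278085937500, 0, 0;
         -15012700453574148059759 / 355573458431542968750000,
           37751222339857820917 / 135456555592968750000,
           2547104330002710487 / 10159241669472656250,
           -3921377950657453 / 7299755859375000, 4 / 5, 0;
         94181 / 262500, -53 / 100, 3 / 5, -125681 / 262500, 4 / 5, 1 / 4]
    let E : Matrix (Fin 6) (Fin 6) ℝ := fun i j => if j ≤ i then 1 else 0
    let M : Matrix (Fin 6) (Fin 6) ℝ := E⁻¹ * AI
    ∀ x : Fin 6 → ℝ, x ≠ 0 → 0 < x ⬝ᵥ (((1 : ℝ) / 2) • (M + Mᵀ)).mulVec x := by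
  intro AI E M x hx
  have hM : M = backwardDiff 6 ℝ * ierk47Implicit := by
    rw [← inv_lowerOnes]
    rfl
  rw [dotProduct_half_smul_add_transpose_mulVec, hM, ierk47_quadForm_eq_sum_sq]
  exact sum_mul_sq_mulVec_pos ierk47LDLDiag_pos
    (isUnit_of_isUpperTriangular_of_diag_eq_one ierk47LDLUpper_isUpperTriangular
      ierk47LDLUpper_diag) hx
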